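/- arXiv:1912.07993 — 4 statements merged into one kernel-verified Lean document; each statement's English description precedes it below -/
import Mathlib

section
/- Let K, L ⊆ ℝⁿ be convex bodies and let λ ∈ (0,1). Then W((1−λ)K + λL)^{1/n} ≥ (1/(n!)^{1/n}) · ((1−λ)·W(K)^{1/n} + λ·W(L)^{1/n}). -/
/-!
The superlevel sets `{e^{-π d(x, X)²} ≥ t}` of the Wills integrand are the parallel bodies
`X + ρ B`, and `(1 - λ)(K + ρ B) + λ (L + ρ B) ⊆ (1 - λ) K + λ L + ρ B`. Translating two compact
sets so that they touch along a hyperplane gives the crude Brunn–Minkowski inequality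
`vol A + vol B ≤ vol (A + B)`; by homogeneity of volume and the layer-cake formula this yields
`W((1 - λ) K + λ L) ≥ (1 - λ)ⁿ W(K) + λⁿ W(L)`. Taking `n`-th roots costs the factor
`2ⁿ⁻¹ ≤ n!` from `(x + y)ⁿ ≤ 2ⁿ⁻¹ (xⁿ + yⁿ)`.
-/

open scoped Pointwise
open MeasureTheory Metric Real

/-- The Wills functional `W(K) = ∫_{ℝⁿ} e^{-π d(x,K)²} dx`. -/
noncomputable def wills {n : ℕ} (K : Set (EuclideanSpace ℝ (Fin n))) : ℝ :=
  ∫ x, Real.exp (-π * (Metric.infDist x K) ^ 2)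

theorem smul_cthickening_add_smul_cthickening_subset {E : Type*} [SeminormedAddCommGroup E]
    [NormedSpace ℝ E] {a b δ : ℝ} (ha : 0 ≤ a) (hb : 0 ≤ b) (hδ : 0 ≤ δ) {K L : Set E}
    (hK : IsCompact K) (hL : IsCompact L) :
    a • cthickening δ K + b • cthickening δ L ⊆ cthickening ((a + b) * δ) (a • K + b • L) := by
  rw [hK.cthickening_eq_biUnion_closedBall hδ, hL.cthickening_eq_biUnion_closedBall hδ]
  rintro _ ⟨_, ⟨x, hx, rfl⟩, _, ⟨y, hy, rfl⟩, rfl⟩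
  obtain ⟨k, hk, hxk⟩ := Set.mem_iUnion₂.1 hx
  obtain ⟨m, hm, hym⟩ := Set.mem_iUnion₂.1 hy
  rw [mem_closedBall, dist_eq_norm] at hxk hym
  refine mem_cthickening_of_dist_le _ (a • k + b • m) _ _
    (Set.add_mem_add (Set.smul_mem_smul_set hk) (Set.smul_mem_smul_set hm)) ?_
  calc dist (a • x + b • y) (a • k + b • m) = ‖a • (x - k) + b • (y - m)‖ := by
        rw [dist_eq_norm, smul_sub, smul_sub, add_sub_add_comm]
    _ ≤ a * ‖x - k‖ + b * ‖y - m‖ := by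
        grw [norm_add_le, norm_smul, norm_smul, Real.norm_of_nonneg ha, Real.norm_of_nonneg hb]
    _ ≤ (a + b) * δ := by
        rw [add_mul]
        gcongr

theorem setOf_le_exp_neg_mul_infDist_sq {α : Type*} [PseudoMetricSpace α] {X : Set α}
    (hX : X.Nonempty) {b t : ℝ} (hb : 0 < b) (ht₀ : 0 < t) (ht₁ : t ≤ 1) :
    {x | t ≤ exp (-b * infDist x X ^ 2)} = cthickening √(log t⁻¹ / b) X := by
  ext x
  have hlog : 0 ≤ log t⁻¹ / b := div_nonneg (log_nonneg ((one_le_inv₀ ht₀).2 ht₁)) hb.le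
  rw [Set.mem_ofPred_eq, mem_cthickening_iff,
    ENNReal.le_ofReal_iff_toReal_le (infEDist_ne_top hX) (sqrt_nonneg _), ← infDist,
    le_sqrt infDist_nonneg hlog, ← log_le_iff_le_exp ht₀, le_div_iff₀ hb, log_inv]
  constructor <;> intro h <;> linarith

section AddHaar

variable {E : Type*} [NormedAddCommGroup E] [NormedSpace ℝ E] [MeasurableSpace E] [BorelSpace E]
  [FiniteDimensional ℝ E] (μ : Measure E) [μ.IsAddHaarMeasure]

theorem addHaar_preimage_singleton_eq_zero {φ : E →L[ℝ] ℝ} (hφ : φ ≠ 0) (c : ℝ) :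
    μ (φ ⁻¹' {c}) = 0 := by
  obtain ⟨w, hw⟩ : ∃ w, φ w ≠ 0 := by
    by_contra! h
    exact hφ (ContinuousLinearMap.ext h)
  set v := (c / φ w) • w
  have hker : LinearMap.ker (φ : E →ₗ[ℝ] ℝ) ≠ ⊤ := fun h =>
    hw (h ▸ Submodule.mem_top : w ∈ LinearMap.ker (φ : E →ₗ[ℝ] ℝ))
  have hlevel : φ ⁻¹' {c} = (fun x => -v + x) ⁻¹' LinearMap.ker (φ : E →ₗ[ℝ] ℝ) := by
    ext x
    simp [v, hw, sub_eq_zero, neg_add_eq_sub]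
  rw [hlevel, measure_preimage_add]
  exact Measure.addHaar_submodule μ _ hker

theorem addHaar_add_addHaar_le_addHaar_add [Nontrivial E] {A B : Set E} (hA : IsCompact A)
    (hB : IsCompact B) (hA₀ : A.Nonempty) (hB₀ : B.Nonempty) : μ A + μ B ≤ μ (A + B) := by
  obtain ⟨φ, hφ⟩ : ∃ φ : E →L[ℝ] ℝ, φ ≠ 0 := by
    obtain ⟨x, hx⟩ := exists_ne (0 : E)
    obtain ⟨φ, -, hφx⟩ := exists_dual_vector ℝ x (norm_ne_zero_iff.2 hx)
    exact ⟨φ, fun h => hx (norm_eq_zero.1 (by simpa [h] using hφx.symm))⟩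
  obtain ⟨a, haA, ha⟩ := hA.exists_isMaxOn hA₀ φ.continuous.continuousOn
  obtain ⟨b, hbB, hb⟩ := hB.exists_isMinOn hB₀ φ.continuous.continuousOn
  have hleft : b +ᵥ A ⊆ A + B := by
    rintro _ ⟨x, hx, rfl⟩
    simpa only [vadd_eq_add, add_comm b] using Set.add_mem_add hx hbB
  have hright : a +ᵥ B ⊆ A + B := by
    rintro _ ⟨y, hy, rfl⟩
    exact Set.add_mem_add haA hy
  have hinter : (b +ᵥ A) ∩ (a +ᵥ B) ⊆ φ ⁻¹' {φ a + φ b} := by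
    rintro _ ⟨⟨x, hx, rfl⟩, ⟨y, hy, hyx⟩⟩
    have hφx : φ x ≤ φ a := ha hx
    have hφy : φ b ≤ φ y := hb hy
    have hφyx := congrArg φ hyx
    simp only [vadd_eq_add, map_add, Set.mem_preimage, Set.mem_singleton_iff] at hφyx ⊢
    linarith
  calc μ A + μ B = μ (b +ᵥ A) + μ (a +ᵥ B) := by rw [measure_vadd, measure_vadd]
    _ = μ ((b +ᵥ A) ∪ (a +ᵥ B)) :=
      (measure_union₀ (hB.vadd a).isClosed.measurableSet.nullMeasurableSet
        (measure_mono_null hinter (addHaar_preimage_singleton_eq_zero μ hφ _))).symm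
    _ ≤ μ (A + B) := measure_mono (Set.union_subset hleft hright)

theorem pow_finrank_mul_addHaar_levelSet_add_le [Nontrivial E] {K L : Set E} (hK : IsCompact K)
    (hK₀ : K.Nonempty) (hL : IsCompact L) (hL₀ : L.Nonempty) {a b : ℝ} (ha : 0 ≤ a)
    (hb : 0 ≤ b) (hab : a + b = 1) {c t : ℝ} (hc : 0 < c) (ht : 0 < t) :
    ENNReal.ofReal (a ^ Module.finrank ℝ E) * μ {x | t ≤ exp (-c * infDist x K ^ 2)} +
        ENNReal.ofReal (b ^ Module.finrank ℝ E) * μ {x | t ≤ exp (-c * infDist x L ^ 2)} ≤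
      μ {x | t ≤ exp (-c * infDist x (a • K + b • L) ^ 2)} := by
  rcases le_or_gt t 1 with ht₁ | ht₁
  · have hM₀ : (a • K + b • L).Nonempty := hK₀.smul_set.add hL₀.smul_set
    set ρ := √(log t⁻¹ / c)
    rw [setOf_le_exp_neg_mul_infDist_sq hK₀ hc ht ht₁,
      setOf_le_exp_neg_mul_infDist_sq hL₀ hc ht ht₁, setOf_le_exp_neg_mul_infDist_sq hM₀ hc ht ht₁,
      ← abs_of_nonneg (pow_nonneg ha _), ← abs_of_nonneg (pow_nonneg hb _),
      ← Measure.addHaar_smul, ← Measure.addHaar_smul]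
    calc μ (a • cthickening ρ K) + μ (b • cthickening ρ L)
        ≤ μ (a • cthickening ρ K + b • cthickening ρ L) :=
          addHaar_add_addHaar_le_addHaar_add μ (hK.cthickening.smul a) (hL.cthickening.smul b)
            (hK₀.mono (self_subset_cthickening K)).smul_set
            (hL₀.mono (self_subset_cthickening L)).smul_set
      _ ≤ μ (cthickening ρ (a • K + b • L)) := by
          refine measure_mono ?_
          simpa only [hab, one_mul] using
            smul_cthickening_add_smul_cthickening_subset ha hb (sqrt_nonneg _) hK hL
  · have hempty : ∀ X : Set E, {x | t ≤ exp (-c * infDist x X ^ 2)} = ∅ := fun X =>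
      Set.eq_empty_of_forall_notMem fun x hx =>
        (ht₁.trans_le hx).not_ge (exp_le_one_iff.2 (by nlinarith [sq_nonneg (infDist x X)]))
    rw [hempty K, hempty L]
    simp

end AddHaar

theorem integrable_exp_neg_mul_infDist_sq {V : Type*} [NormedAddCommGroup V]
    [InnerProductSpace ℝ V] [FiniteDimensional ℝ V] [MeasurableSpace V] [BorelSpace V]
    {X : Set V} (hX : Bornology.IsBounded X) (hX₀ : X.Nonempty) {b : ℝ} (hb : 0 < b) :
    Integrable (fun x => exp (-b * infDist x X ^ 2)) := by
  obtain ⟨y, hy⟩ := hX₀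
  set R := diam X + ‖y‖
  have hgauss : Integrable (fun x : V => exp (b * R ^ 2) * exp (-(b / 2) * ‖x‖ ^ 2)) := by
    refine Integrable.const_mul ?_ _
    have := (GaussianFourier.integrable_cexp_neg_mul_sq_norm_add (V := V) (b := (b / 2 : ℂ))
      (by simpa using hb) 0 0).norm
    simpa [Complex.norm_exp, ← Complex.ofReal_pow] using this
  refine hgauss.mono' (by fun_prop) (ae_of_all _ fun x => ?_)
  rw [norm_of_nonneg (exp_pos _).le, ← exp_add, exp_le_exp]
  have hx : ‖x‖ ≤ infDist x X + R := by
    have hdist := dist_le_infDist_add_diam (x := x) hX hy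
    rw [dist_eq_norm] at hdist
    linarith [norm_le_norm_add_norm_sub' x y]
  have hx2 : ‖x‖ ^ 2 ≤ 2 * infDist x X ^ 2 + 2 * R ^ 2 := by
    nlinarith [norm_nonneg x, sq_nonneg (infDist x X - R)]
  nlinarith [mul_le_mul_of_nonneg_left hx2 hb.le]

theorem wills_nonneg {n : ℕ} (X : Set (EuclideanSpace ℝ (Fin n))) : 0 ≤ wills X :=
  integral_nonneg fun _ => (exp_pos _).le

theorem ofReal_wills_eq_lintegral_volume {n : ℕ} {X : Set (EuclideanSpace ℝ (Fin n))}
    (hX : IsCompact X) (hX₀ : X.Nonempty) :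
    ENNReal.ofReal (wills X) =
      ∫⁻ t in Set.Ioi 0, volume {x | t ≤ exp (-π * infDist x X ^ 2)} := by
  have hpos : 0 ≤ᵐ[volume] fun x => exp (-π * infDist x X ^ 2) :=
    ae_of_all _ fun _ => (exp_pos _).le
  rw [wills, ofReal_integral_eq_lintegral_ofReal
    (integrable_exp_neg_mul_infDist_sq hX.isBounded hX₀ pi_pos) hpos]
  exact lintegral_eq_lintegral_meas_le _ hpos (by fun_prop)

theorem pow_mul_wills_add_pow_mul_wills_le {n : ℕ} (hn : n ≠ 0)
    {K L : Set (EuclideanSpace ℝ (Fin n))} (hK : IsCompact K) (hK₀ : K.Nonempty)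
    (hL : IsCompact L) (hL₀ : L.Nonempty) {a b : ℝ} (ha : 0 ≤ a) (hb : 0 ≤ b) (hab : a + b = 1) :
    a ^ n * wills K + b ^ n * wills L ≤ wills (a • K + b • L) := by
  have : Nonempty (Fin n) := ⟨⟨0, Nat.pos_of_ne_zero hn⟩⟩
  have hM : IsCompact (a • K + b • L) := (hK.smul a).add (hL.smul b)
  have hM₀ : (a • K + b • L).Nonempty := hK₀.smul_set.add hL₀.smul_set
  have hlevel := fun t (ht : t ∈ Set.Ioi (0 : ℝ)) =>
    pow_finrank_mul_addHaar_levelSet_add_le volume hK hK₀ hL hL₀ ha hb hab pi_pos ht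
  simp only [finrank_euclideanSpace_fin] at hlevel
  rw [← ENNReal.ofReal_le_ofReal_iff (wills_nonneg _),
    ENNReal.ofReal_add (by positivity [wills_nonneg K]) (by positivity [wills_nonneg L]),
    ENNReal.ofReal_mul (by positivity), ENNReal.ofReal_mul (by positivity),
    ofReal_wills_eq_lintegral_volume hK hK₀, ofReal_wills_eq_lintegral_volume hL hL₀,
    ofReal_wills_eq_lintegral_volume hM hM₀, ← lintegral_const_mul' _ _ ENNReal.ofReal_ne_top,
    ← lintegral_const_mul' _ _ ENNReal.ofReal_ne_top]
  exact (le_lintegral_add _ _).trans (setLIntegral_mono' measurableSet_Ioi hlevel)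

open Nat in
theorem add_pow_le_factorial_mul {x y : ℝ} (hx : 0 ≤ x) (hy : 0 ≤ y) (n : ℕ) :
    (x + y) ^ n ≤ n ! * (x ^ n + y ^ n) := by
  have h2 : (2 : ℝ) ^ (n - 1) ≤ n ! := by
    rcases n with _ | k
    · simp
    · exact_mod_cast by simpa [add_comm] using factorial_mul_pow_le_factorial (m := 1) (n := k)
  exact (add_pow_le hx hy n).trans (by gcongr)

theorem wills_brunn_minkowski_constant_general {n : ℕ} (K L : Set (EuclideanSpace ℝ (Fin n)))
    (hK₁ : IsCompact K) (hK₃ : K.Nonempty)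
    (hL₁ : IsCompact L) (hL₃ : L.Nonempty)
    {l : ℝ} (hl : l ∈ Set.Ioo (0 : ℝ) 1) :
    wills ((1 - l) • K + l • L) ^ ((1 : ℝ) / n) ≥
      (1 / (n.factorial : ℝ) ^ ((1 : ℝ) / n)) *
        ((1 - l) * wills K ^ ((1 : ℝ) / n) + l * wills L ^ ((1 : ℝ) / n)) := by
  obtain ⟨hl₀, hl₁⟩ := hl
  rcases eq_or_ne n 0 with rfl | hn
  · norm_num
  have hmix := pow_mul_wills_add_pow_mul_wills_le hn hK₁ hK₃ hL₁ hL₃ (sub_nonneg.2 hl₁.le)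
    hl₀.le (sub_add_cancel 1 l)
  set x := (1 - l) * wills K ^ ((1 : ℝ) / n)
  set y := l * wills L ^ ((1 : ℝ) / n)
  have hx : 0 ≤ x := mul_nonneg (sub_nonneg.2 hl₁.le) (rpow_nonneg (wills_nonneg K) _)
  have hy : 0 ≤ y := mul_nonneg hl₀.le (rpow_nonneg (wills_nonneg L) _)
  have hxy : (x + y) ^ n ≤ n.factorial * wills ((1 - l) • K + l • L) := by
    refine (add_pow_le_factorial_mul hx hy n).trans (mul_le_mul_of_nonneg_left ?_ (by positivity))
    rwa [mul_pow, mul_pow, one_div, rpow_inv_natCast_pow (wills_nonneg K) hn,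
      rpow_inv_natCast_pow (wills_nonneg L) hn]
  have hroot : x + y ≤
      (n.factorial : ℝ) ^ ((1 : ℝ) / n) * wills ((1 - l) • K + l • L) ^ ((1 : ℝ) / n) := by
    rw [← mul_rpow (by positivity) (wills_nonneg _), one_div,
      ← pow_rpow_inv_natCast (add_nonneg hx hy) hn]
    gcongr
  rw [ge_iff_le, one_div_mul_eq_div, div_le_iff₀ (by positivity), mul_comm]
  exact hroot

/-- Brunn-Minkowski type inequality with constant `1/(n!)^{1/n}`:
`W((1-λ)K + λL)^{1/n} ≥ (1/(n!)^{1/n}) ((1-λ) W(K)^{1/n} + λ W(L)^{1/n})`. -/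
theorem wills_brunn_minkowski_constant {n : ℕ} (K L : Set (EuclideanSpace ℝ (Fin n)))
    (hK₁ : IsCompact K) (hK₂ : Convex ℝ K) (hK₃ : K.Nonempty)
    (hL₁ : IsCompact L) (hL₂ : Convex ℝ L) (hL₃ : L.Nonempty)
    {l : ℝ} (hl : l ∈ Set.Ioo (0 : ℝ) 1) :
    wills ((1 - l) • K + l • L) ^ ((1 : ℝ) / n) ≥
      (1 / (n.factorial : ℝ) ^ ((1 : ℝ) / n)) *
        ((1 - l) * wills K ^ ((1 : ℝ) / n) + l * wills L ^ ((1 : ℝ) / n)) :=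
  wills_brunn_minkowski_constant_general K L hK₁ hK₃ hL₁ hL₃ hl
end

section
/- Let K, L ⊆ ℝⁿ be convex bodies with K ∩ L ≠ ∅. Then W(K ∩ L) · W((K − L)/2) ≤ 2ⁿ · W(K) · W(L), where K − L = K + (−L) is the Minkowski difference body. In particular, W(K − K) ≤ 2ⁿ · W(2K). -/
/-!
If `a ∈ K ∩ L`, `b ∈ K`, `c ∈ L`, then `(a + b)/2 ∈ K` and `(a + c)/2 ∈ L`, and the parallelogram
law bounds `d(x,K)² + d(y,L)²` by `½ (d(x + y - (b + c)/2, K ∩ L)² + ‖x - y - (b - c)/2‖²)`.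
Choosing `(b - c)/2` nearest to `v = x - y` in `(K - L)/2`, exponentiating and integrating in `x`
for fixed `v` (then in `v`, by Fubini) gives
`W_{π/2}(K ∩ L) · W_{π/2}((K - L)/2) ≤ 2ⁿ W(K) W(L)`, where `W_t` (`willsLIntegral t`) uses the
weight `e^{-t d²}` and the factor `2ⁿ` is the Jacobian of `x ↦ 2x`; finally `W ≤ W_{π/2}`.
The difference body inequality is the case `K = L := 2K`.
-/

open scoped Pointwise
open MeasureTheory Metric Real

open scoped ENNReal

theorem Set.smul_set_sub {M A : Type*} [AddGroup A] [DistribSMul M A] (a : M) (s t : Set A) :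
    a • (s - t) = a • s - a • t := by
  simp only [← Set.image_smul]
  exact Set.image_sub (DistribSMul.toAddMonoidHom A a)

theorem IsCompact.sub {G : Type*} [AddGroup G] [TopologicalSpace G] [IsTopologicalAddGroup G]
    {s t : Set G} (hs : IsCompact s) (ht : IsCompact t) : IsCompact (s - t) := by
  rw [sub_eq_add_neg]
  exact hs.add ht.neg

section InnerProductSpace

variable {E : Type*} [NormedAddCommGroup E] [InnerProductSpace ℝ E] {K L : Set E}

theorem infDist_sq_add_infDist_sq_le (hK : Convex ℝ K) (hL : Convex ℝ L) {a b c : E}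
    (ha : a ∈ K ∩ L) (hb : b ∈ K) (hc : c ∈ L) (x y : E) :
    infDist x K ^ 2 + infDist y L ^ 2 ≤
      2⁻¹ * (‖x + y - (2:ℝ)⁻¹ • (b + c) - a‖ ^ 2 + ‖x - y - (2:ℝ)⁻¹ • (b - c)‖ ^ 2) := by
  set u := x + y - (2:ℝ)⁻¹ • (b + c) - a
  set w := x - y - (2:ℝ)⁻¹ • (b - c)
  have hxK : infDist x K ≤ ‖(2:ℝ)⁻¹ • (u + w)‖ := by
    have hmem : (2:ℝ)⁻¹ • a + (2:ℝ)⁻¹ • b ∈ K := hK ha.1 hb (by norm_num) (by norm_num) (by norm_num)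
    convert infDist_le_dist_of_mem hmem using 1
    rw [dist_eq_norm]; congr 1; module
  have hyL : infDist y L ≤ ‖(2:ℝ)⁻¹ • (u - w)‖ := by
    have hmem : (2:ℝ)⁻¹ • a + (2:ℝ)⁻¹ • c ∈ L := hL ha.2 hc (by norm_num) (by norm_num) (by norm_num)
    convert infDist_le_dist_of_mem hmem using 1
    rw [dist_eq_norm]; congr 1; module
  have hpar := parallelogram_law_with_norm ℝ u w
  rw [norm_smul, Real.norm_of_nonneg (by norm_num)] at hxK hyL
  nlinarith [pow_le_pow_left₀ infDist_nonneg hxK 2, pow_le_pow_left₀ infDist_nonneg hyL 2]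

theorem infDist_sq_add_infDist_sq_le_infDist_sq (hK : Convex ℝ K) (hL : Convex ℝ L)
    (hKL : IsCompact (K ∩ L)) (hKL' : (K ∩ L).Nonempty) {b c : E} (hb : b ∈ K) (hc : c ∈ L)
    (x y : E) :
    infDist x K ^ 2 + infDist y L ^ 2 ≤
      2⁻¹ * (infDist (x + y - (2:ℝ)⁻¹ • (b + c)) (K ∩ L) ^ 2 + ‖x - y - (2:ℝ)⁻¹ • (b - c)‖ ^ 2) := by
  obtain ⟨a, ha, hdist⟩ := hKL.exists_infDist_eq_dist hKL' (x + y - (2:ℝ)⁻¹ • (b + c))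
  rw [hdist, dist_eq_norm]
  exact infDist_sq_add_infDist_sq_le hK hL ha hb hc x y

end InnerProductSpace

theorem lintegral_mul_lintegral_eq_lintegral_lintegral_sub {G : Type*} [MeasurableSpace G]
    [AddGroup G] [MeasurableAdd₂ G] [MeasurableNeg G] (μ : Measure G) [SFinite μ]
    [μ.IsAddLeftInvariant] [μ.IsNegInvariant] {f g : G → ℝ≥0∞} (hf : Measurable f)
    (hg : Measurable g) :
    (∫⁻ x, f x ∂μ) * ∫⁻ y, g y ∂μ = ∫⁻ v, ∫⁻ x, f x * g (x - v) ∂μ ∂μ := by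
  calc (∫⁻ x, f x ∂μ) * ∫⁻ y, g y ∂μ
      = ∫⁻ x, ∫⁻ v, f x * g (x - v) ∂μ ∂μ := by
        rw [← lintegral_mul_const _ hf]
        refine lintegral_congr fun x => ?_
        rw [lintegral_const_mul _ (by fun_prop), lintegral_sub_left_eq_self]
    _ = ∫⁻ v, ∫⁻ x, f x * g (x - v) ∂μ ∂μ := lintegral_lintegral_swap (by fun_prop)

theorem lintegral_comp_smul_sub {E : Type*} [NormedAddCommGroup E] [NormedSpace ℝ E]
    [FiniteDimensional ℝ E] [MeasurableSpace E] [BorelSpace E] (μ : Measure E)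
    [μ.IsAddHaarMeasure] {f : E → ℝ≥0∞} (hf : Measurable f) {r : ℝ} (hr : r ≠ 0) (z : E) :
    ENNReal.ofReal (|r| ^ Module.finrank ℝ E) * ∫⁻ x, f (r • x - z) ∂μ = ∫⁻ x, f x ∂μ := by
  rw [← lintegral_map (f := fun x => f (x - z)) (by fun_prop) (by fun_prop),
    Measure.map_addHaar_smul _ hr, lintegral_smul_measure, lintegral_sub_right_eq_self,
    smul_eq_mul, ← mul_assoc, ← ENNReal.ofReal_mul (by positivity), abs_inv, abs_pow,
    mul_inv_cancel₀ (by positivity), ENNReal.ofReal_one, one_mul]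

section FiniteDimensional

variable {E : Type*} [NormedAddCommGroup E] [InnerProductSpace ℝ E] [FiniteDimensional ℝ E]
  [MeasurableSpace E] [BorelSpace E]

/-- Valued in `ℝ≥0∞` to avoid integrability side conditions; the width `t` is a parameter because
the argument passes through `t = π / 2`. -/
noncomputable def willsLIntegral (t : ℝ) (A : Set E) : ℝ≥0∞ :=
  ∫⁻ x, ENNReal.ofReal (exp (-t * infDist x A ^ 2))

theorem willsLIntegral_anti {s t : ℝ} (hst : s ≤ t) (A : Set E) :
    willsLIntegral t A ≤ willsLIntegral s A :=
  lintegral_mono (μ := volume) fun x => ENNReal.ofReal_le_ofReal <| exp_le_exp.2 <| by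
    nlinarith [sq_nonneg (infDist x A)]

theorem integrable_exp_neg_mul_sq_norm {t : ℝ} (ht : 0 < t) :
    Integrable fun x : E => exp (-t * ‖x‖ ^ 2) := by
  refine (GaussianFourier.integrable_cexp_neg_mul_sq_norm_add (V := E) (b := (t : ℂ))
    (by simpa using ht) 0 0).norm.congr (Filter.Eventually.of_forall fun x => ?_)
  simp only [zero_mul, add_zero, Complex.norm_exp]
  norm_cast

theorem integrable_exp_neg_mul_infDist_sq_s9 {t : ℝ} (ht : 0 < t) {A : Set E}
    (hA : Bornology.IsBounded A) (hA' : A.Nonempty) :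
    Integrable fun x => exp (-t * infDist x A ^ 2) := by
  obtain ⟨R, hR⟩ := hA.subset_closedBall 0
  refine Integrable.mono' ((integrable_exp_neg_mul_sq_norm (half_pos ht)).const_mul
    (exp (t * R ^ 2))) (by fun_prop) (Filter.Eventually.of_forall fun x => ?_)
  have hnorm : ‖x‖ ≤ infDist x A + R := by
    rw [← sub_le_iff_le_add, le_infDist hA']
    intro y hy
    have := norm_sub_norm_le x y
    have := mem_closedBall_zero_iff.1 (hR hy)
    rw [dist_eq_norm]
    linarith
  have hsq : ‖x‖ ^ 2 ≤ 2 * infDist x A ^ 2 + 2 * R ^ 2 := by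
    nlinarith [sq_nonneg (infDist x A - R), norm_nonneg x]
  rw [Real.norm_of_nonneg (exp_pos _).le, ← exp_add]
  refine exp_le_exp.2 ?_
  nlinarith [mul_le_mul_of_nonneg_left hsq ht.le]

theorem willsLIntegral_ne_top {t : ℝ} (ht : 0 < t) {A : Set E}
    (hA : Bornology.IsBounded A) (hA' : A.Nonempty) : willsLIntegral t A ≠ ⊤ :=
  (integrable_exp_neg_mul_infDist_sq_s9 ht hA hA').lintegral_lt_top.ne

variable {K L : Set E}

theorem exp_mul_willsLIntegral_le_lintegral (hK₁ : IsCompact K) (hK₂ : Convex ℝ K)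
    (hL₁ : IsCompact L) (hL₂ : Convex ℝ L) (hKL : (K ∩ L).Nonempty) {t : ℝ} (ht : 0 ≤ t) (v : E) :
    ENNReal.ofReal (exp (-(t / 2) * infDist v ((2:ℝ)⁻¹ • (K - L)) ^ 2)) *
        willsLIntegral (t / 2) (K ∩ L) ≤
      ENNReal.ofReal (2 ^ Module.finrank ℝ E) *
        ∫⁻ x, ENNReal.ofReal (exp (-t * infDist x K ^ 2)) *
          ENNReal.ofReal (exp (-t * infDist (x - v) L ^ 2)) := by
  obtain ⟨m, hm, hvm⟩ := ((hK₁.sub hL₁).smul (2:ℝ)⁻¹).exists_infDist_eq_dist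
    ((hKL.mono Set.inter_subset_left).sub (hKL.mono Set.inter_subset_right)).smul_set v
  obtain ⟨_, ⟨b, hb, c, hc, rfl⟩, rfl⟩ := hm
  set z := v + (2:ℝ)⁻¹ • (b + c)
  have hpoint : ∀ x, ENNReal.ofReal (exp (-(t / 2) * infDist v ((2:ℝ)⁻¹ • (K - L)) ^ 2)) *
      ENNReal.ofReal (exp (-(t / 2) * infDist ((2:ℝ) • x - z) (K ∩ L) ^ 2)) ≤
      ENNReal.ofReal (exp (-t * infDist x K ^ 2)) *
        ENNReal.ofReal (exp (-t * infDist (x - v) L ^ 2)) := by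
    intro x
    have h := infDist_sq_add_infDist_sq_le_infDist_sq hK₂ hL₂ (hK₁.inter hL₁) hKL hb hc x (x - v)
    have hz : x + (x - v) - (2:ℝ)⁻¹ • (b + c) = (2:ℝ) • x - z := by module
    have hw : ‖x - (x - v) - (2:ℝ)⁻¹ • (b - c)‖ = infDist v ((2:ℝ)⁻¹ • (K - L)) := by
      rw [hvm, dist_eq_norm]; congr 1; module
    rw [hz, hw] at h
    rw [← ENNReal.ofReal_mul (exp_pos _).le, ← ENNReal.ofReal_mul (exp_pos _).le, ← exp_add,
      ← exp_add]
    refine ENNReal.ofReal_le_ofReal (exp_le_exp.2 ?_)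
    nlinarith [mul_le_mul_of_nonneg_left h ht]
  calc ENNReal.ofReal (exp (-(t / 2) * infDist v ((2:ℝ)⁻¹ • (K - L)) ^ 2)) *
        willsLIntegral (t / 2) (K ∩ L)
      = ENNReal.ofReal (2 ^ Module.finrank ℝ E) *
          ∫⁻ x, ENNReal.ofReal (exp (-(t / 2) * infDist v ((2:ℝ)⁻¹ • (K - L)) ^ 2)) *
            ENNReal.ofReal (exp (-(t / 2) * infDist ((2:ℝ) • x - z) (K ∩ L) ^ 2)) := by
        rw [lintegral_const_mul _ (by fun_prop), mul_left_comm, willsLIntegral,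
          ← lintegral_comp_smul_sub volume (by fun_prop) two_ne_zero z, abs_two]
    _ ≤ _ := by gcongr _ * ?_; exact lintegral_mono hpoint

theorem willsLIntegral_inter_mul_willsLIntegral_half_sub_le (hK₁ : IsCompact K)
    (hK₂ : Convex ℝ K) (hL₁ : IsCompact L) (hL₂ : Convex ℝ L) (hKL : (K ∩ L).Nonempty)
    {t : ℝ} (ht : 0 ≤ t) :
    willsLIntegral (t / 2) (K ∩ L) * willsLIntegral (t / 2) ((2:ℝ)⁻¹ • (K - L)) ≤
      ENNReal.ofReal (2 ^ Module.finrank ℝ E) * (willsLIntegral t K * willsLIntegral t L) := by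
  calc willsLIntegral (t / 2) (K ∩ L) * willsLIntegral (t / 2) ((2:ℝ)⁻¹ • (K - L))
      = ∫⁻ v, ENNReal.ofReal (exp (-(t / 2) * infDist v ((2:ℝ)⁻¹ • (K - L)) ^ 2)) *
          willsLIntegral (t / 2) (K ∩ L) := by
        rw [mul_comm, willsLIntegral, lintegral_mul_const _ (by fun_prop)]
    _ ≤ ∫⁻ v, ENNReal.ofReal (2 ^ Module.finrank ℝ E) *
          ∫⁻ x, ENNReal.ofReal (exp (-t * infDist x K ^ 2)) *
            ENNReal.ofReal (exp (-t * infDist (x - v) L ^ 2)) :=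
        lintegral_mono fun v => exp_mul_willsLIntegral_le_lintegral hK₁ hK₂ hL₁ hL₂ hKL ht v
    _ = ENNReal.ofReal (2 ^ Module.finrank ℝ E) * (willsLIntegral t K * willsLIntegral t L) := by
        rw [lintegral_const_mul _ (by fun_prop), willsLIntegral, willsLIntegral,
          lintegral_mul_lintegral_eq_lintegral_lintegral_sub volume (by fun_prop) (by fun_prop)]

end FiniteDimensional

section EuclideanSpace

variable {n : ℕ} {K L : Set (EuclideanSpace ℝ (Fin n))}

theorem wills_eq_toReal_willsLIntegral (A : Set (EuclideanSpace ℝ (Fin n))) :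
    wills A = (willsLIntegral π A).toReal :=
  integral_eq_lintegral_of_nonneg_ae (Filter.Eventually.of_forall fun _ => (exp_pos _).le)
    (by fun_prop)

theorem wills_pos {A : Set (EuclideanSpace ℝ (Fin n))} (hA : Bornology.IsBounded A)
    (hA' : A.Nonempty) : 0 < wills A :=
  integral_exp_pos (integrable_exp_neg_mul_infDist_sq_s9 pi_pos hA hA')

theorem wills_inter_mul_wills_half_sub_le (hK₁ : IsCompact K) (hK₂ : Convex ℝ K)
    (hL₁ : IsCompact L) (hL₂ : Convex ℝ L) (hKL : (K ∩ L).Nonempty) :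
    wills (K ∩ L) * wills ((2:ℝ)⁻¹ • (K - L)) ≤ 2 ^ n * (wills K * wills L) := by
  have h : willsLIntegral π (K ∩ L) * willsLIntegral π ((2:ℝ)⁻¹ • (K - L)) ≤
      ENNReal.ofReal (2 ^ n) * (willsLIntegral π K * willsLIntegral π L) := by
    have hhalf := willsLIntegral_inter_mul_willsLIntegral_half_sub_le hK₁ hK₂ hL₁ hL₂ hKL pi_pos.le
    rw [finrank_euclideanSpace_fin] at hhalf
    refine le_trans ?_ hhalf
    gcongr <;> exact willsLIntegral_anti (half_le_self pi_pos.le) _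
  have hfin : ENNReal.ofReal (2 ^ n) * (willsLIntegral π K * willsLIntegral π L) ≠ ⊤ :=
    ENNReal.mul_ne_top ENNReal.ofReal_ne_top <| ENNReal.mul_ne_top
      (willsLIntegral_ne_top pi_pos hK₁.isBounded (hKL.mono Set.inter_subset_left))
      (willsLIntegral_ne_top pi_pos hL₁.isBounded (hKL.mono Set.inter_subset_right))
  simpa only [wills_eq_toReal_willsLIntegral, ENNReal.toReal_mul,
    ENNReal.toReal_ofReal (by positivity : (0:ℝ) ≤ 2 ^ n)] using ENNReal.toReal_mono hfin h

theorem wills_sub_self_le (hK₁ : IsCompact K) (hK₂ : Convex ℝ K) (hK₃ : K.Nonempty) :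
    wills (K - K) ≤ 2 ^ n * wills ((2:ℝ) • K) := by
  have h := wills_inter_mul_wills_half_sub_le (hK₁.smul (2:ℝ)) (hK₂.smul 2) (hK₁.smul (2:ℝ))
    (hK₂.smul 2) (by rw [Set.inter_self]; exact hK₃.smul_set)
  rw [Set.inter_self, ← Set.smul_set_sub, smul_smul, inv_mul_cancel₀ two_ne_zero, one_smul,
    mul_left_comm] at h
  exact le_of_mul_le_mul_left h (wills_pos (hK₁.smul (2:ℝ)).isBounded hK₃.smul_set)

end EuclideanSpace

theorem wills_rogers_shephard_general {n : ℕ} (K L : Set (EuclideanSpace ℝ (Fin n)))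
    (hK₁ : IsCompact K) (hK₂ : Convex ℝ K)
    (hL₁ : IsCompact L) (hL₂ : Convex ℝ L)
    (hKL : (K ∩ L).Nonempty) :
    wills (K ∩ L) * wills ((2 : ℝ)⁻¹ • (K - L)) ≤ (2 : ℝ) ^ n * (wills K * wills L) ∧
      wills (K - K) ≤ (2 : ℝ) ^ n * wills ((2 : ℝ) • K) :=
  ⟨wills_inter_mul_wills_half_sub_le hK₁ hK₂ hL₁ hL₂ hKL,
    wills_sub_self_le hK₁ hK₂ (hKL.mono Set.inter_subset_left)⟩

/-- For convex bodies `K, L ⊆ ℝⁿ` with `K ∩ L ≠ ∅`,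
`W(K ∩ L) W((K - L)/2) ≤ 2ⁿ W(K) W(L)`, where `K - L = K + (-L)` is the Minkowski
difference body. In particular, `W(K - K) ≤ 2ⁿ W(2K)`. -/
theorem wills_rogers_shephard {n : ℕ} (K L : Set (EuclideanSpace ℝ (Fin n)))
    (hK₁ : IsCompact K) (hK₂ : Convex ℝ K) (hK₃ : K.Nonempty)
    (hL₁ : IsCompact L) (hL₂ : Convex ℝ L) (hL₃ : L.Nonempty)
    (hKL : (K ∩ L).Nonempty) :
    wills (K ∩ L) * wills ((2 : ℝ)⁻¹ • (K - L)) ≤ (2 : ℝ) ^ n * (wills K * wills L) ∧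
      wills (K - K) ≤ (2 : ℝ) ^ n * wills ((2 : ℝ) • K) :=
  wills_rogers_shephard_general K L hK₁ hK₂ hL₁ hL₂ hKL
end

section
/- Let K, E ⊆ ℝⁿ be convex bodies with 0 ∈ int E and let u ∈ co(ℝ≥0) be strictly increasing. Then ∫_{ℝⁿ} e^{−u(d_E(x,K))} dx = ∫_{u(0)}^{∞} vol(K + u^{−1}(s)·E) · e^{−s} ds, where u^{−1} denotes the inverse function of u, vol is the Lebesgue measure on ℝⁿ, and K + u^{−1}(s)·E is a Minkowski sum. -/
/-!
Write `w x = u (d_E(x, K))`. Since `e^{-w x} = ∫_{w x}^∞ e^{-s} ds`, Tonelli turns the left-hand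
side into the layer-cake integral `∫ vol {w ≤ s} e^{-s} ds`. Because `K` and `E` are compact, the
set `{t ≥ 0 | x ∈ K + t E}` is closed, so the infimum defining `d_E(x, K)` is attained and
`d_E(x, K) ≤ t ↔ x ∈ K + t E`; as `u` is strictly increasing, `{w ≤ s} = K + u⁻¹(s) E` for
`s ≥ u 0`, while `{w ≤ s} = ∅` for `s < u 0`.
-/

open scoped Pointwise
open MeasureTheory Metric Real

/-- The relative distance `d_E(x,K) = min {t ≥ 0 : x ∈ K + tE}`. -/
noncomputable def distE {V : Type*} [AddCommGroup V] [Module ℝ V] (E K : Set V) (x : V) : ℝ :=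
  sInf {t : ℝ | 0 ≤ t ∧ x ∈ K + t • E}

open scoped ENNReal
open Set Filter Topology

lemma StarConvex.smul_set_subset_of_le {V : Type*} [AddCommGroup V] [Module ℝ V] {E : Set V}
    (hE : StarConvex ℝ 0 E) {a b : ℝ} (ha : 0 ≤ a) (hab : a ≤ b) : a • E ⊆ b • E := by
  rintro _ ⟨e, he, rfl⟩
  rcases (ha.trans hab).eq_or_lt with rfl | hb
  · obtain rfl : a = 0 := le_antisymm hab ha
    exact ⟨e, he, rfl⟩
  · refine ⟨(a / b) • e, hE.smul_mem he (by positivity) ((div_le_one hb).2 hab), ?_⟩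
    simp only [smul_smul, mul_div_cancel₀ _ hb.ne']

section RelativeDistance

variable {V : Type*} [AddCommGroup V] [Module ℝ V] {K E : Set V}

lemma distE_nonneg (x : V) : 0 ≤ distE E K x :=
  Real.sInf_nonneg fun _ ht ↦ ht.1

variable [TopologicalSpace V]

lemma exists_nonneg_mem_add_smul [ContinuousSMul ℝ V] (hK : K.Nonempty) (hE : E ∈ 𝓝 0) (x : V) :
    ∃ t : ℝ, 0 ≤ t ∧ x ∈ K + t • E := by
  obtain ⟨k, hk⟩ := hK
  obtain ⟨r, hr, hsub⟩ := (absorbent_nhds_zero (𝕜 := ℝ) hE (x - k)).exists_pos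
  refine ⟨r, hr.le, k, hk, x - k, hsub r ?_ rfl, add_sub_cancel _ _⟩
  rw [Real.norm_of_nonneg hr.le]

lemma isClosed_setOf_mem_add_smul [ContinuousAdd V] [ContinuousSMul ℝ V] [T1Space V]
    (hK : IsCompact K) (hE : IsCompact E) (x : V) : IsClosed {t : ℝ | x ∈ K + t • E} := by
  have := isCompact_iff_compactSpace.1 (hK.prod hE)
  have hclosed : IsClosed {p : ℝ × (K ×ˢ E) | (p.2 : V × V).1 + p.1 • (p.2 : V × V).2 = x} :=
    isClosed_singleton.preimage (by fun_prop)
  convert isClosedMap_fst_of_compactSpace _ hclosed using 1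
  ext t
  constructor
  · rintro ⟨k, hk, _, ⟨e, he, rfl⟩, hx⟩
    exact ⟨(t, ⟨(k, e), hk, he⟩), hx, rfl⟩
  · rintro ⟨⟨t, ⟨⟨k, e⟩, hk, he⟩⟩, hx, rfl⟩
    exact ⟨k, hk, t • e, ⟨e, he, rfl⟩, hx⟩

variable [ContinuousAdd V] [ContinuousSMul ℝ V] [T1Space V]

lemma mem_add_distE_smul (hK : IsCompact K) (hK₀ : K.Nonempty) (hE : IsCompact E)
    (hE₀ : E ∈ 𝓝 0) (x : V) : x ∈ K + distE E K x • E :=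
  (((isClosed_Ici (a := (0 : ℝ))).inter (isClosed_setOf_mem_add_smul hK hE x)).csInf_mem
    (exists_nonneg_mem_add_smul hK₀ hE₀ x) ⟨0, fun _ ht ↦ ht.1⟩).2

lemma distE_le_iff (hK : IsCompact K) (hK₀ : K.Nonempty) (hE : IsCompact E) (hE₀ : E ∈ 𝓝 0)
    (hE_star : StarConvex ℝ 0 E) {x : V} {t : ℝ} (ht : 0 ≤ t) :
    distE E K x ≤ t ↔ x ∈ K + t • E :=
  ⟨fun h ↦ add_subset_add_left (hE_star.smul_set_subset_of_le (distE_nonneg x) h)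
      (mem_add_distE_smul hK hK₀ hE hE₀ x),
    fun h ↦ csInf_le ⟨0, fun _ hs ↦ hs.1⟩ ⟨ht, h⟩⟩

lemma setOf_comp_distE_le (hK : IsCompact K) (hK₀ : K.Nonempty) (hE : IsCompact E)
    (hE₀ : E ∈ 𝓝 0) (hE_star : StarConvex ℝ 0 E) {u : ℝ → ℝ} (hu : StrictMonoOn u (Ici 0))
    {t : ℝ} (ht : 0 ≤ t) : {x | u (distE E K x) ≤ u t} = K + t • E := by
  ext x
  exact (hu.le_iff_le (distE_nonneg x) ht).trans (distE_le_iff hK hK₀ hE hE₀ hE_star ht)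

end RelativeDistance

lemma lintegral_ofReal_exp_neg_Ici (a : ℝ) :
    ∫⁻ s in Ici a, ENNReal.ofReal (exp (-s)) = ENNReal.ofReal (exp (-a)) := by
  have hint : IntegrableOn (fun s ↦ exp (-s)) (Ici a) := by
    simpa [integrableOn_Ici_iff_integrableOn_Ioi] using exp_neg_integrableOn_Ioi a one_pos
  rw [← ofReal_integral_eq_lintegral_ofReal hint (ae_of_all _ fun _ ↦ (exp_pos _).le),
    integral_Ici_eq_integral_Ioi, integral_exp_neg_Ioi]

lemma lintegral_ofReal_exp_neg_eq_lintegral_measure_le {α : Type*} [MeasurableSpace α]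
    {μ : Measure α} [SFinite μ] {w : α → ℝ} (hw : Measurable w) :
    ∫⁻ x, ENNReal.ofReal (exp (-w x)) ∂μ =
      ∫⁻ s, μ {x | w x ≤ s} * ENNReal.ofReal (exp (-s)) := by
  let f : α → ℝ → ℝ≥0∞ := fun x s ↦
    {p : α × ℝ | w p.1 ≤ p.2}.indicator (fun p ↦ ENNReal.ofReal (exp (-p.2))) (x, s)
  have hf : Measurable (Function.uncurry f) :=
    measurable_snd.neg.exp.ennreal_ofReal.indicator
      (measurableSet_le (hw.comp measurable_fst) measurable_snd)
  calc ∫⁻ x, ENNReal.ofReal (exp (-w x)) ∂μ = ∫⁻ x, (∫⁻ s, f x s) ∂μ := by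
        congr 1 with x
        rw [← lintegral_ofReal_exp_neg_Ici, ← lintegral_indicator measurableSet_Ici]
        rfl
    _ = ∫⁻ s, ∫⁻ x, f x s ∂μ := lintegral_lintegral_swap hf.aemeasurable
    _ = _ := by
        congr 1 with s
        rw [mul_comm, ← lintegral_indicator_const (s := {x | w x ≤ s}) (hw measurableSet_Iic)]
        rfl

lemma integral_exp_neg_eq_setIntegral_measure_le {α : Type*} [MeasurableSpace α]
    {μ : Measure α} [SFinite μ] {w : α → ℝ} {a : ℝ} (hw : Measurable w)
    (hfin : ∀ s, μ {x | w x ≤ s} ≠ ∞) (ha : ∀ x, a ≤ w x) :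
    ∫ x, exp (-w x) ∂μ = ∫ s in Ici a, (μ {x | w x ≤ s}).toReal * exp (-s) := by
  have hmono : Monotone fun s ↦ μ {x | w x ≤ s} :=
    fun _ _ hst ↦ measure_mono fun _ hx ↦ le_trans hx hst
  have hsupp :
      (Function.support fun s ↦ μ {x | w x ≤ s} * ENNReal.ofReal (exp (-s))) ⊆ Ici a := by
    intro s hs
    by_contra hsa
    have hempty : {x | w x ≤ s} = ∅ := eq_empty_of_forall_notMem fun x hx ↦ hsa ((ha x).trans hx)
    exact hs (by simp only [hempty, measure_empty, zero_mul])
  rw [integral_eq_lintegral_of_nonneg_ae (f := fun x ↦ exp (-w x))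
      (ae_of_all _ fun _ ↦ (exp_pos _).le) hw.neg.exp.aestronglyMeasurable,
    integral_eq_lintegral_of_nonneg_ae (f := fun s ↦ (μ {x | w x ≤ s}).toReal * exp (-s))
      (ae_of_all _ fun _ ↦ by positivity)
      (hmono.measurable.ennreal_toReal.mul measurable_neg.exp).aestronglyMeasurable,
    lintegral_ofReal_exp_neg_eq_lintegral_measure_le hw, ← setLIntegral_eq_of_support_subset hsupp]
  congr 1
  refine lintegral_congr fun s ↦ ?_
  rw [ENNReal.ofReal_mul ENNReal.toReal_nonneg, ENNReal.ofReal_toReal (hfin s)]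

theorem willsGen_steiner_formula_general {n : ℕ} (K E : Set (EuclideanSpace ℝ (Fin n)))
    (hK₁ : IsCompact K) (hK₃ : K.Nonempty)
    (hE₁ : IsCompact E) (hE₂ : Convex ℝ E) (hE₃ : (0 : EuclideanSpace ℝ (Fin n)) ∈ interior E)
    (u : ℝ → ℝ) (hu₂ : StrictMonoOn u (Set.Ici 0))
    (v : ℝ → ℝ)
    (hv₂ : ∀ s ∈ Set.Ici (u 0), 0 ≤ v s ∧ u (v s) = s) :
    ∫ x, Real.exp (-u (distE E K x)) =
      ∫ s in Set.Ici (u 0), (volume (K + v s • E)).toReal * Real.exp (-s) := by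
  set w := fun x ↦ u (distE E K x)
  have hw₀ : ∀ x, u 0 ≤ w x :=
    fun x ↦ hu₂.monotoneOn self_mem_Ici (distE_nonneg x) (distE_nonneg x)
  have hlevel : ∀ s ∈ Ici (u 0), {x | w x ≤ s} = K + v s • E := fun s hs ↦ by
    obtain ⟨hvs, huvs⟩ := hv₂ s hs
    conv_lhs => rw [← huvs]
    exact setOf_comp_distE_le hK₁ hK₃ hE₁ (mem_interior_iff_mem_nhds.1 hE₃)
      (hE₂.starConvex (interior_subset hE₃)) hu₂ hvs
  have hcompact : ∀ s, IsCompact {x | w x ≤ s} := fun s ↦ by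
    rcases lt_or_ge s (u 0) with hs | hs
    · convert isCompact_empty
      exact eq_empty_of_forall_notMem fun x hx ↦ (hs.trans_le (hw₀ x)).not_ge hx
    · rw [hlevel s hs]
      exact hK₁.add (hE₁.smul _)
  rw [integral_exp_neg_eq_setIntegral_measure_le
    (measurable_of_Iic fun s ↦ (hcompact s).measurableSet)
    (fun s ↦ (hcompact s).measure_lt_top.ne) hw₀]
  exact setIntegral_congr_fun measurableSet_Ici fun s hs ↦ by rw [hlevel s hs]

/-- For convex bodies `K, E ⊆ ℝⁿ` with `0 ∈ int E` and `u ∈ co(ℝ≥0)`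
strictly increasing with inverse `v`,
`∫_{ℝⁿ} e^{-u(d_E(x,K))} dx = ∫_{u(0)}^∞ vol(K + u⁻¹(s) E) e^{-s} ds`. -/
theorem willsGen_steiner_formula {n : ℕ} (K E : Set (EuclideanSpace ℝ (Fin n)))
    (hK₁ : IsCompact K) (hK₂ : Convex ℝ K) (hK₃ : K.Nonempty)
    (hE₁ : IsCompact E) (hE₂ : Convex ℝ E) (hE₃ : (0 : EuclideanSpace ℝ (Fin n)) ∈ interior E)
    (u : ℝ → ℝ) (hu₁ : ConvexOn ℝ (Set.Ici 0) u) (hu₂ : StrictMonoOn u (Set.Ici 0))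
    (hu₃ : ContinuousOn u (Set.Ici 0))
    (v : ℝ → ℝ) (hv₁ : ∀ t ∈ Set.Ici (0 : ℝ), v (u t) = t)
    (hv₂ : ∀ s ∈ Set.Ici (u 0), 0 ≤ v s ∧ u (v s) = s) :
    ∫ x, Real.exp (-u (distE E K x)) =
      ∫ s in Set.Ici (u 0), (volume (K + v s • E)).toReal * Real.exp (-s) :=
  willsGen_steiner_formula_general K E hK₁ hK₃ hE₁ hE₂ hE₃ u hu₂ v hv₂
end

section
/- Let K, L ⊆ ℝⁿ be convex bodies and let λ ∈ (0,1) be such that (λK) ∩ ((1−λ)L) ≠ ∅. Then W( ((λK) ∩ ((1−λ)L)) / √(λ(1−λ)) ) · W((1−λ)K − λL) ≤ (λ(1−λ))^{−n/2} · W(K) · W(L), where (1−λ)K − λL = (1−λ)K + (−λL) is a Minkowski sum and the division denotes dilation by the factor 1/√(λ(1−λ)). -/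
open scoped Pointwise
open MeasureTheory Metric Real

/-!
Write `A = λK ∩ (1-λ)L`, `B = (1-λ)K - λL` and `s = √(λ(1-λ))`. Fix `v`, and let `b = p - q` be
a point of `B` nearest to `v`, with `p ∈ (1-λ)K`, `q ∈ λL`. For `a ∈ A`, convexity gives
`p + a ∈ K` and `q + a ∈ L`, and the parallelogram law then yields, for `x = u + (v + p + q)/2`,
`d(x,K)² + d(x-v,L)² ≤ 2 d(u,A)² + d(v,B)²`. Integrating in `u` and then in `v` gives
`(∫ e^{-2π d(u,A)²} du) · W(B) ≤ W(K) W(L)`, and substituting `u = s w` (note `2s² ≤ 1`) bounds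
the first factor below by `sⁿ W(A/s)`.
-/

open scoped ENNReal
open Module

section DistGaussian

variable {X : Type*} [PseudoMetricSpace X]

noncomputable def distGaussian (a : ℝ) (C : Set X) (x : X) : ℝ≥0∞ :=
  ENNReal.ofReal (exp (-a * infDist x C ^ 2))

theorem continuous_distGaussian (a : ℝ) (C : Set X) : Continuous (distGaussian a C) :=
  ENNReal.continuous_ofReal.comp <| continuous_exp.comp <|
    continuous_const.mul ((continuous_infDist_pt C).pow 2)

theorem antitone_distGaussian (C : Set X) (x : X) : Antitone fun a => distGaussian a C x :=
  fun _ _ hab => ENNReal.ofReal_le_ofReal <| exp_le_exp.2 <| by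
    nlinarith [sq_nonneg (infDist x C)]

theorem distGaussian_smul {E : Type*} [NormedAddCommGroup E] [NormedSpace ℝ E] {c : ℝ}
    (hc : 0 < c) (a : ℝ) (C : Set E) (x : E) :
    distGaussian a (c • C) (c • x) = distGaussian (a * c ^ 2) C x := by
  simp only [distGaussian, infDist_smul₀ hc.ne', norm_of_nonneg hc.le]
  ring_nf

end DistGaussian

section Geometry

variable {E : Type*} [NormedAddCommGroup E] [InnerProductSpace ℝ E]

theorem sq_infDist_add_sq_infDist_le {K L : Set E} (hK : Convex ℝ K) (hL : Convex ℝ L)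
    {l : ℝ} (hl₀ : 0 ≤ l) (hl₁ : l ≤ 1) {a p q : E} (ha : a ∈ l • K ∩ (1 - l) • L)
    (hp : p ∈ (1 - l) • K) (hq : q ∈ l • L) (u v : E) :
    infDist (u + (2 : ℝ)⁻¹ • (v + p + q)) K ^ 2 + infDist (u + (2 : ℝ)⁻¹ • (v + p + q) - v) L ^ 2
      ≤ 2 * ‖u - a‖ ^ 2 + ‖v - (p - q)‖ ^ 2 := by
  have hk : p + a ∈ K := by
    have := hK.add_smul (sub_nonneg.2 hl₁) hl₀
    rw [sub_add_cancel, one_smul] at this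
    exact this ▸ Set.add_mem_add hp ha.1
  have hm : q + a ∈ L := by
    have := hL.add_smul hl₀ (sub_nonneg.2 hl₁)
    rw [add_sub_cancel, one_smul] at this
    exact this ▸ Set.add_mem_add hq ha.2
  set w := u - a
  set e := (2 : ℝ)⁻¹ • (v - (p - q))
  have hxk : u + (2 : ℝ)⁻¹ • (v + p + q) - (p + a) = w + e := by
    simp only [w, e]; module
  have hym : u + (2 : ℝ)⁻¹ • (v + p + q) - v - (q + a) = w - e := by
    simp only [w, e]; module
  have hdK := infDist_le_dist_of_mem hk (x := u + (2 : ℝ)⁻¹ • (v + p + q))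
  have hdL := infDist_le_dist_of_mem hm (x := u + (2 : ℝ)⁻¹ • (v + p + q) - v)
  rw [dist_eq_norm, hxk] at hdK
  rw [dist_eq_norm, hym] at hdL
  have he : ‖e‖ ^ 2 = ‖v - (p - q)‖ ^ 2 / 4 := by
    rw [norm_smul, mul_pow]; norm_num; ring
  calc infDist _ K ^ 2 + infDist _ L ^ 2 ≤ ‖w + e‖ ^ 2 + ‖w - e‖ ^ 2 := by
        gcongr <;> exact infDist_nonneg
    _ = 2 * ‖w‖ ^ 2 + ‖v - (p - q)‖ ^ 2 / 2 := by
        linear_combination parallelogram_law_with_norm ℝ w e + 2 * he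
    _ ≤ 2 * ‖w‖ ^ 2 + ‖v - (p - q)‖ ^ 2 := by linarith [sq_nonneg ‖v - (p - q)‖]

theorem exists_distGaussian_mul_le {K L : Set E} (hK₁ : IsCompact K) (hK₂ : Convex ℝ K)
    (hL₁ : IsCompact L) (hL₂ : Convex ℝ L) {l : ℝ} (hl₀ : 0 ≤ l) (hl₁ : l ≤ 1)
    (hKL : (l • K ∩ (1 - l) • L).Nonempty) {a : ℝ} (ha : 0 ≤ a) (v : E) :
    ∃ c : E, ∀ u, distGaussian (2 * a) (l • K ∩ (1 - l) • L) u *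
        distGaussian a ((1 - l) • K - l • L) v ≤
      distGaussian a K (u + c) * distGaussian a L (u + c - v) := by
  have hA : IsCompact (l • K ∩ (1 - l) • L) := (hK₁.smul l).inter_right (hL₁.smul _).isClosed
  have hB : IsCompact ((1 - l) • K - l • L) := by
    rw [sub_eq_add_neg, ← Set.neg_smul_set]
    exact (hK₁.smul _).add (hL₁.smul _)
  have hBne : ((1 - l) • K - l • L).Nonempty :=
    (Set.smul_set_nonempty.1 (hKL.mono Set.inter_subset_left)).smul_set.sub
      (Set.smul_set_nonempty.1 (hKL.mono Set.inter_subset_right)).smul_set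
  obtain ⟨_, ⟨p, hp, q, hq, rfl⟩, hvb⟩ := hB.exists_infDist_eq_dist hBne v
  refine ⟨(2 : ℝ)⁻¹ • (v + p + q), fun u => ?_⟩
  obtain ⟨t, ht, hut⟩ := hA.exists_infDist_eq_dist hKL u
  have h := sq_infDist_add_sq_infDist_le hK₂ hL₂ hl₀ hl₁ ht hp hq u v
  rw [← dist_eq_norm, ← dist_eq_norm, ← hut, ← hvb] at h
  simp only [distGaussian, ← ENNReal.ofReal_mul (exp_pos _).le, ← exp_add]
  exact ENNReal.ofReal_le_ofReal <| exp_le_exp.2 <| by nlinarith [mul_le_mul_of_nonneg_left h ha]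

end Geometry

theorem lintegral_comp_smul {E : Type*} [NormedAddCommGroup E] [NormedSpace ℝ E]
    [MeasurableSpace E] [BorelSpace E] [FiniteDimensional ℝ E] (μ : Measure E)
    [μ.IsAddHaarMeasure] (f : E → ℝ≥0∞) {c : ℝ} (hc : c ≠ 0) :
    ∫⁻ x, f (c • x) ∂μ = ENNReal.ofReal |(c ^ finrank ℝ E)⁻¹| * ∫⁻ x, f x ∂μ := by
  rw [← smul_eq_mul, ← lintegral_smul_measure, ← Measure.map_addHaar_smul μ hc]
  exact (lintegral_map_equiv f (Homeomorph.smulOfNeZero c hc).toMeasurableEquiv).symm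

theorem lintegral_lintegral_mul_comp_sub {G : Type*} [MeasurableSpace G] [AddGroup G]
    [MeasurableAdd₂ G] [MeasurableNeg G] (μ : Measure G) [SFinite μ] [μ.IsAddLeftInvariant]
    [μ.IsNegInvariant] {f g : G → ℝ≥0∞} (hf : Measurable f) (hg : Measurable g) :
    ∫⁻ v, ∫⁻ x, f x * g (x - v) ∂μ ∂μ = (∫⁻ x, f x ∂μ) * ∫⁻ x, g x ∂μ := by
  rw [lintegral_lintegral_swap ((hf.comp measurable_snd).mul
    (hg.comp (measurable_snd.sub measurable_fst))).aemeasurable]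
  calc ∫⁻ x, ∫⁻ v, f x * g (x - v) ∂μ ∂μ = ∫⁻ x, f x * ∫⁻ v, g (x - v) ∂μ ∂μ :=
        lintegral_congr fun x => lintegral_const_mul _ (hg.comp (measurable_const.sub measurable_id))
    _ = (∫⁻ x, f x ∂μ) * ∫⁻ x, g x ∂μ := by
        simp_rw [lintegral_sub_left_eq_self g]
        exact lintegral_mul_const _ hf

section Integrals

variable {E : Type*} [NormedAddCommGroup E] [InnerProductSpace ℝ E] [FiniteDimensional ℝ E]
  [MeasurableSpace E] [BorelSpace E]

theorem lintegral_distGaussian_smul {c : ℝ} (hc : 0 < c) (a : ℝ) (C : Set E) :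
    ∫⁻ x, distGaussian a (c • C) x =
      ENNReal.ofReal (c ^ finrank ℝ E) * ∫⁻ x, distGaussian (a * c ^ 2) C x := by
  have h := lintegral_comp_smul volume (distGaussian a (c • C)) hc.ne'
  simp_rw [distGaussian_smul hc] at h
  rw [h, ← mul_assoc, ← ENNReal.ofReal_mul (by positivity), abs_of_pos (by positivity),
    mul_inv_cancel₀ (by positivity), ENNReal.ofReal_one, one_mul]

theorem lintegral_distGaussian_lt_top {a : ℝ} (ha : 0 < a) {C : Set E}
    (hC : Bornology.IsBounded C) (hne : C.Nonempty) : ∫⁻ x, distGaussian a C x < ∞ := by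
  obtain ⟨R, hR⟩ := (isBounded_iff_subset_closedBall 0).1 hC
  have hgauss : Integrable fun x : E => exp (a * R ^ 2) * exp (-(a / 2) * ‖x‖ ^ 2) :=
    (Integrable.of_integral_ne_zero (by
      rw [GaussianFourier.integral_rexp_neg_mul_sq_norm (by positivity)]
      positivity)).const_mul _
  refine lt_of_le_of_lt (lintegral_mono fun x => ?_) hgauss.lintegral_lt_top
  have hdist : ‖x‖ ≤ infDist x C + R := by
    have : ‖x‖ - R ≤ infDist x C := (le_infDist hne).2 fun y hy => by
      rw [dist_eq_norm]
      linarith [norm_sub_norm_le x y, mem_closedBall_zero_iff.1 (hR hy)]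
    linarith
  have hsq : ‖x‖ ^ 2 ≤ 2 * infDist x C ^ 2 + 2 * R ^ 2 := by
    nlinarith [pow_le_pow_left₀ (norm_nonneg x) hdist 2, sq_nonneg (infDist x C - R)]
  refine ENNReal.ofReal_le_ofReal ?_
  rw [← exp_add]
  exact exp_le_exp.2 <| by nlinarith [mul_le_mul_of_nonneg_left hsq ha.le]

theorem lintegral_distGaussian_mul_le {K L : Set E} (hK₁ : IsCompact K) (hK₂ : Convex ℝ K)
    (hL₁ : IsCompact L) (hL₂ : Convex ℝ L) {l : ℝ} (hl : l ∈ Set.Ioo (0 : ℝ) 1)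
    (hKL : (l • K ∩ (1 - l) • L).Nonempty) {a : ℝ} (ha : 0 ≤ a) :
    ENNReal.ofReal (√(l * (1 - l)) ^ finrank ℝ E) *
        ((∫⁻ x, distGaussian a ((√(l * (1 - l)))⁻¹ • (l • K ∩ (1 - l) • L)) x) *
          ∫⁻ x, distGaussian a ((1 - l) • K - l • L) x) ≤
      (∫⁻ x, distGaussian a K x) * ∫⁻ x, distGaussian a L x := by
  obtain ⟨hl₀, hl₁⟩ := hl
  set s := √(l * (1 - l))
  set A := l • K ∩ (1 - l) • L
  set B := (1 - l) • K - l • L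
  have hs : 0 < s := sqrt_pos.2 (by nlinarith)
  have hs₂ : 2 * a * s ^ 2 ≤ a := by
    rw [sq_sqrt (by nlinarith)]
    nlinarith [mul_nonneg ha (sq_nonneg (2 * l - 1))]
  have hmeas : ∀ b C, Measurable (distGaussian (X := E) b C) := fun b C =>
    (continuous_distGaussian b C).measurable
  calc ENNReal.ofReal (s ^ finrank ℝ E) *
        ((∫⁻ x, distGaussian a (s⁻¹ • A) x) * ∫⁻ x, distGaussian a B x)
      ≤ ENNReal.ofReal (s ^ finrank ℝ E) *
          ((∫⁻ x, distGaussian (2 * a * s ^ 2) (s⁻¹ • A) x) * ∫⁻ x, distGaussian a B x) := by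
        gcongr with x
        exact antitone_distGaussian _ x hs₂
    _ = (∫⁻ u, distGaussian (2 * a) A u) * ∫⁻ v, distGaussian a B v := by
        rw [← mul_assoc, ← lintegral_distGaussian_smul hs, smul_inv_smul₀ hs.ne']
    _ = ∫⁻ v, ∫⁻ u, distGaussian (2 * a) A u * distGaussian a B v := by
        rw [← lintegral_const_mul _ (hmeas _ _)]
        exact lintegral_congr fun v => (lintegral_mul_const _ (hmeas _ _)).symm
    _ ≤ ∫⁻ v, ∫⁻ x, distGaussian a K x * distGaussian a L (x - v) := by
        refine lintegral_mono fun v => ?_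
        obtain ⟨c, hc⟩ := exists_distGaussian_mul_le hK₁ hK₂ hL₁ hL₂ hl₀.le hl₁.le hKL ha v
        calc ∫⁻ u, distGaussian (2 * a) A u * distGaussian a B v
            ≤ ∫⁻ u, distGaussian a K (u + c) * distGaussian a L (u + c - v) := lintegral_mono hc
          _ = ∫⁻ x, distGaussian a K x * distGaussian a L (x - v) :=
              lintegral_add_right_eq_self (fun x => distGaussian a K x * distGaussian a L (x - v)) c
    _ = (∫⁻ x, distGaussian a K x) * ∫⁻ x, distGaussian a L x :=
        lintegral_lintegral_mul_comp_sub volume (hmeas _ _) (hmeas _ _)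

end Integrals

theorem wills_eq_toReal_lintegral {n : ℕ} (C : Set (EuclideanSpace ℝ (Fin n))) :
    wills C = (∫⁻ x, distGaussian π C x).toReal :=
  integral_eq_lintegral_of_nonneg_ae (Filter.Eventually.of_forall fun _ => (exp_pos _).le)
    (continuous_exp.comp (continuous_const.mul
      ((continuous_infDist_pt C).pow 2))).aestronglyMeasurable

theorem wills_rogers_shephard_two_bodies_general {n : ℕ} (K L : Set (EuclideanSpace ℝ (Fin n)))
    (hK₁ : IsCompact K) (hK₂ : Convex ℝ K)
    (hL₁ : IsCompact L) (hL₂ : Convex ℝ L)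
    {l : ℝ} (hl : l ∈ Set.Ioo (0 : ℝ) 1)
    (hKL : ((l • K) ∩ ((1 - l) • L)).Nonempty) :
    wills ((Real.sqrt (l * (1 - l)))⁻¹ • ((l • K) ∩ ((1 - l) • L))) *
        wills ((1 - l) • K - l • L) ≤
      (l * (1 - l)) ^ (-(n : ℝ) / 2) * (wills K * wills L) := by
  have hll : 0 < l * (1 - l) := mul_pos hl.1 (sub_pos.2 hl.2)
  have hK : ∫⁻ x, distGaussian π K x ≠ ∞ := (lintegral_distGaussian_lt_top pi_pos hK₁.isBounded
    (Set.smul_set_nonempty.1 (hKL.mono Set.inter_subset_left))).ne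
  have hL : ∫⁻ x, distGaussian π L x ≠ ∞ := (lintegral_distGaussian_lt_top pi_pos hL₁.isBounded
    (Set.smul_set_nonempty.1 (hKL.mono Set.inter_subset_right))).ne
  have key := ENNReal.toReal_mono (ENNReal.mul_ne_top hK hL)
    (lintegral_distGaussian_mul_le hK₁ hK₂ hL₁ hL₂ hl hKL pi_pos.le)
  simp only [ENNReal.toReal_mul, ENNReal.toReal_ofReal (pow_nonneg (sqrt_nonneg _) _),
    finrank_euclideanSpace_fin, ← wills_eq_toReal_lintegral] at key
  rw [show (l * (1 - l)) ^ (-(n : ℝ) / 2) = (√(l * (1 - l)) ^ n)⁻¹ by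
    rw [sqrt_eq_rpow, ← rpow_natCast, ← rpow_mul hll.le, ← rpow_neg hll.le]; ring_nf]
  exact (le_inv_mul_iff₀ (by positivity)).2 key

/-- For convex bodies `K, L ⊆ ℝⁿ` and `λ ∈ (0,1)` with
`(λK) ∩ ((1-λ)L) ≠ ∅`:
`W(((λK) ∩ ((1-λ)L))/√(λ(1-λ))) · W((1-λ)K - λL) ≤ (λ(1-λ))^{-n/2} W(K) W(L)`. -/
theorem wills_rogers_shephard_two_bodies {n : ℕ} (K L : Set (EuclideanSpace ℝ (Fin n)))
    (hK₁ : IsCompact K) (hK₂ : Convex ℝ K) (hK₃ : K.Nonempty)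
    (hL₁ : IsCompact L) (hL₂ : Convex ℝ L) (hL₃ : L.Nonempty)
    {l : ℝ} (hl : l ∈ Set.Ioo (0 : ℝ) 1)
    (hKL : ((l • K) ∩ ((1 - l) • L)).Nonempty) :
    wills ((Real.sqrt (l * (1 - l)))⁻¹ • ((l • K) ∩ ((1 - l) • L))) *
        wills ((1 - l) • K - l • L) ≤
      (l * (1 - l)) ^ (-(n : ℝ) / 2) * (wills K * wills L) :=
  wills_rogers_shephard_two_bodies_general K L hK₁ hK₂ hL₁ hL₂ hl hKL
end
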